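/- Assume that for each pair (d,h) ∈ D × H there is at most one contract x ∈ 𝐗 with x_D = d and x_H = h, and that every hospital's preference is substitutable. Fix a doctor d and a preference P_d, let y be such that {y} = W_d(P_d, O^{φ̲}(P_d)), choose P̂_{−d} with φ̲_d(P_d, P̂_{−d}) = {y}, and set X̂ := φ̲(P_d, P̂_{−d}). Let P̃_{−d} be the profile in which each doctor i ≠ d ranks X̂_i first, then ∅, with all other contracts unacceptable. Then {y} R_d φ̲_d(P'_d, P̃_{−d}) for every preference P'_d of doctor d. -/

import Mathlib

set_option linter.unusedSectionVars false

namespace Matching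

open Finset

/-- A many-to-one matching market with contracts: each contract `x` involves exactly one
doctor `xD x` and one hospital `xH x`; each hospital `h` has a fixed antisymmetric,
transitive and complete preference `prH h`, modelled as a linear order on sets of
contracts (only its comparisons between allocations of contracts involving `h` matter). -/
structure Market (D H X : Type*) where
  xD : X → D
  xH : X → H
  prH : H → LinearOrder (Finset X)

/-- A doctor's preference: an antisymmetric, transitive and complete preference, modelled
as a linear order on sets of contracts (only comparisons between `∅` and singletons of
contracts involving the doctor matter). -/
abbrev Pref (X : Type*) := LinearOrder (Finset X)

/-- A profile of doctors' preferences. -/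
abbrev Profile (D X : Type*) := D → Pref X

variable {D H X : Type*}
variable [DecidableEq D] [DecidableEq H] [DecidableEq X] [Fintype D] [Fintype H] [Fintype X]

/-- `Y_d` : the contracts in `Y` involving doctor `d`. -/
def docPart (M : Market D H X) (Y : Finset X) (d : D) : Finset X :=
  Y.filter fun x => M.xD x = d

/-- `Y_h` : the contracts in `Y` involving hospital `h`. -/
def hospPart (M : Market D H X) (Y : Finset X) (h : H) : Finset X :=
  Y.filter fun x => M.xH x = h

/-- An allocation: distinct contracts involve distinct doctors. -/
def IsAllocation (M : Market D H X) (Z : Finset X) : Prop :=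
  ∀ x ∈ Z, ∀ y ∈ Z, M.xD x = M.xD y → x = y

/-- `A(Y)` : the allocations contained in `Y`. -/
def allocs (M : Market D H X) (Y : Finset X) : Finset (Finset X) :=
  Y.powerset.filter fun Z => ∀ x ∈ Z, ∀ y ∈ Z, M.xD x = M.xD y → x = y

lemma empty_mem_allocs (M : Market D H X) (Y : Finset X) : ∅ ∈ allocs M Y := by
  simp [allocs]

/-- The best allocation contained in `Y` according to the linear order `pr`. -/
def bestAlloc (M : Market D H X) (pr : Pref X) (Y : Finset X) : Finset X :=
  @Finset.max' _ pr (allocs M Y) ⟨∅, empty_mem_allocs M Y⟩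

/-- `C_h(Y)` : hospital `h`'s choice set from `Y` (the `≻_h`-maximum of `A(Y_h)`). -/
def Ch (M : Market D H X) (h : H) (Y : Finset X) : Finset X :=
  bestAlloc M (M.prH h) (hospPart M Y h)

/-- `C_d(P_d, Y)` : doctor `d`'s choice set from `Y` (the `P_d`-maximum of `A(Y_d)`). -/
def Cd (M : Market D H X) (Pd : Pref X) (d : D) (Y : Finset X) : Finset X :=
  bestAlloc M Pd (docPart M Y d)

/-- `C_H(Y) = ∪_{h ∈ H} C_h(Y)`. -/
def CH (M : Market D H X) (Y : Finset X) : Finset X :=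
  univ.biUnion fun h => Ch M h Y

/-- `C_D(Y) = ∪_{d ∈ D} C_d(Y)`. -/
def CD (M : Market D H X) (P : Profile D X) (Y : Finset X) : Finset X :=
  univ.biUnion fun d => Cd M (P d) d Y

/-- Substitutability of hospital `h`'s preference: `x ∈ C_h(W)` and `x ∈ Y_h ⊆ W_h`
imply `x ∈ C_h(Y)`. -/
def Substitutable (M : Market D H X) (h : H) : Prop :=
  ∀ W Y : Finset X, hospPart M Y h ⊆ hospPart M W h →
    ∀ x ∈ hospPart M Y h, x ∈ Ch M h W → x ∈ Ch M h Y

/-- The sets `X^t` of still-available contracts in the doctor-proposing deferred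
acceptance algorithm (0-based: index `t` corresponds to iteration `t+1`). -/
def DDAsets (M : Market D H X) (P : Profile D X) : ℕ → Finset X
  | 0 => univ
  | t + 1 =>
      DDAsets M P t \ (CD M P (DDAsets M P t) \ CH M (CD M P (DDAsets M P t)))

/-- `O^t` : the offers made by the doctors at iteration `t` of D-DA (0-based). -/
def offers (M : Market D H X) (P : Profile D X) (t : ℕ) : Finset X :=
  CD M P (DDAsets M P t)

/-- `O_A^t = ∪_{k ≤ t} O^k` : the accumulated offers up to iteration `t` (0-based). -/
def accOffers (M : Market D H X) (P : Profile D X) (t : ℕ) : Finset X :=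
  (Finset.range (t + 1)).biUnion fun k => offers M P k

/-- D-DA has stopped at iteration `t`: all offers are accepted. -/
def DDAstopped (M : Market D H X) (P : Profile D X) (t : ℕ) : Prop :=
  CH M (offers M P t) = offers M P t

/-- The (0-based) last iteration of D-DA, i.e. `T - 1` where `T` is the number of
iterations of D-DA. -/
noncomputable def DDAlast (M : Market D H X) (P : Profile D X) : ℕ :=
  sInf {t | DDAstopped M P t}

/-- The output of D-DA (the algorithm provably stops by iteration `Fintype.card X`,
and once stopped the offer sets stay constant). -/
def DDAoutput (M : Market D H X) (P : Profile D X) : Finset X :=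
  CH M (offers M P (Fintype.card X))

/-- The doctor-optimal rule `φ̄`, giving doctor `d`'s outcome `φ̄_d(P)` (an element of
`A(𝐗_d)`, i.e. `∅` or a singleton). -/
def docOpt (M : Market D H X) (P : Profile D X) (d : D) : Finset X :=
  docPart M (DDAoutput M P) d

/-- The sets `X^t` of still-available contracts in the hospital-proposing deferred
acceptance algorithm (0-based). -/
def HDAsets (M : Market D H X) (P : Profile D X) : ℕ → Finset X
  | 0 => univ
  | t + 1 =>
      HDAsets M P t \ (CH M (HDAsets M P t) \ CD M P (CH M (HDAsets M P t)))

/-- The offers made by the hospitals at iteration `t` of H-DA (0-based). -/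
def hOffers (M : Market D H X) (P : Profile D X) (t : ℕ) : Finset X :=
  CH M (HDAsets M P t)

/-- The output of H-DA. -/
def HDAoutput (M : Market D H X) (P : Profile D X) : Finset X :=
  CD M P (hOffers M P (Fintype.card X))

/-- The hospital-optimal rule `φ̲`, giving doctor `d`'s outcome `φ̲_d(P)`. -/
def hospOpt (M : Market D H X) (P : Profile D X) (d : D) : Finset X :=
  docPart M (HDAoutput M P) d

/-- The option set `O^φ(P_d)` left open by `P_d` at the rule `φ`. -/
def optionSet (rule : Profile D X → D → Finset X) (d : D) (Pd : Pref X) :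
    Set (Finset X) :=
  {S | ∃ P : Profile D X, P d = Pd ∧ S = rule P d}

open scoped Classical in
/-- `W_d(pr, S)` : the `pr`-worst element of the (finite) set `S` of outcomes. -/
noncomputable def worstIn (pr : Pref X) (S : Set (Finset X)) : Finset X :=
  if h : S.Nonempty then
    @Finset.min' _ pr (Set.toFinite S).toFinset ((Set.Finite.toFinset_nonempty _).mpr h)
  else ∅

open scoped Classical in
/-- The `pr`-best element of the (finite) set `S` of outcomes. -/
noncomputable def bestIn (pr : Pref X) (S : Set (Finset X)) : Finset X :=
  if h : S.Nonempty then
    @Finset.max' _ pr (Set.toFinite S).toFinset ((Set.Finite.toFinset_nonempty _).mpr h)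
  else ∅

/-- `P'_d` is a manipulation of the rule at `P_d` : for some subprofile of the other
doctors, reporting `P'_d` gives a strictly `P_d`-better outcome than truth-telling. -/
def IsManip (rule : Profile D X → D → Finset X) (d : D) (Pd P'd : Pref X) : Prop :=
  ∃ P : Profile D X, P d = Pd ∧
    Pd.lt (rule P d) (rule (Function.update P d P'd) d)

/-- `P'_d` is an obvious manipulation of the rule at `P_d`. -/
def IsObviousManip (rule : Profile D X → D → Finset X) (d : D) (Pd P'd : Pref X) :
    Prop :=
  IsManip rule d Pd P'd ∧
    (Pd.lt (worstIn Pd (optionSet rule d Pd)) (worstIn Pd (optionSet rule d P'd)) ∨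
     Pd.lt (bestIn Pd (optionSet rule d Pd)) (bestIn Pd (optionSet rule d P'd)))

/-- A rule is not obviously manipulable (NOM). -/
def NOM (rule : Profile D X → D → Finset X) : Prop :=
  ∀ (d : D) (Pd P'd : Pref X), ¬ IsObviousManip rule d Pd P'd

/-- A rule is obviously manipulable (OM). -/
def OM (rule : Profile D X → D → Finset X) : Prop :=
  ∃ (d : D) (Pd P'd : Pref X), IsObviousManip rule d Pd P'd

/-- `Y` is a stable allocation at the profile `P` : it is an individually rational
allocation and admits no blocking contract. -/
def IsStable (M : Market D H X) (P : Profile D X) (Y : Finset X) : Prop :=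
  IsAllocation M Y ∧ CD M P Y = Y ∧ CH M Y = Y ∧
    ∀ x : X, x ∉ Y →
      ¬ (x ∈ Cd M (P (M.xD x)) (M.xD x) (insert x Y) ∧
         x ∈ Ch M (M.xH x) (insert x Y))

/-- `⌈kq⌉` where `k` is the number of stable allocations at `P`. -/
noncomputable def quantileIndex (M : Market D H X) (P : Profile D X) (q : ℝ) : ℕ :=
  ⌈(Set.ncard {Y : Finset X | IsStable M P Y} : ℝ) * q⌉₊

/-- `Z` is doctor `d`'s `⌈kq⌉`-th best outcome (according to `P d`) among the `k` stable
allocations at `P` : it is the outcome of some stable allocation, strictly fewer than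
`⌈kq⌉` stable allocations give `d` a strictly better outcome, and at least `⌈kq⌉` stable
allocations give `d` a weakly better outcome. -/
def IsQuantileOutcome (M : Market D H X) (P : Profile D X) (q : ℝ) (d : D)
    (Z : Finset X) : Prop :=
  (∃ Y : Finset X, IsStable M P Y ∧ docPart M Y d = Z) ∧
    Set.ncard {Y : Finset X | IsStable M P Y ∧ (P d).lt Z (docPart M Y d)} <
      quantileIndex M P q ∧
    quantileIndex M P q ≤
      Set.ncard {Y : Finset X | IsStable M P Y ∧ (P d).le Z (docPart M Y d)}

/-!
Under `P̃`, every contract of `X̂` not involving `d` is accepted by its doctor whenever it is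
offered. By substitutability, in every round of H-DA at `(P'_d, P̃_{-d})` each hospital other
than `y_H` therefore still has available everything it had available at the end of H-DA at
`(P_d, P̂_{-d})`. So a contract that `d` signs at a hospital other than `y_H` was already
offered to `d` during H-DA at `(P_d, P̂_{-d})`, and since a doctor's best offer only improves
along H-DA, it is no better than `y`. The only contract of `d` at `y_H` is `y` itself.
-/

section Choice

variable {M : Market D H X}

lemma mem_docPart {Y : Finset X} {d : D} {x : X} :
    x ∈ docPart M Y d ↔ x ∈ Y ∧ M.xD x = d :=
  Finset.mem_filter

lemma mem_hospPart {Y : Finset X} {h : H} {x : X} :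
    x ∈ hospPart M Y h ↔ x ∈ Y ∧ M.xH x = h :=
  Finset.mem_filter

lemma hospPart_subset_hospPart {Y W : Finset X} {h : H}
    (hYW : ∀ x ∈ Y, M.xH x = h → x ∈ W) : hospPart M Y h ⊆ hospPart M W h := fun x hx =>
  let ⟨hxY, hxh⟩ := mem_hospPart.1 hx
  mem_hospPart.2 ⟨hYW x hxY hxh, hxh⟩

lemma mem_allocs {Y Z : Finset X} : Z ∈ allocs M Y ↔ Z ⊆ Y ∧ IsAllocation M Z := by
  simp [allocs, IsAllocation]

lemma mem_allocs_of_subset {Y W Z : Finset X} (hZ : Z ∈ allocs M Y) (hZW : Z ⊆ W) :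
    Z ∈ allocs M W :=
  mem_allocs.2 ⟨hZW, (mem_allocs.1 hZ).2⟩

lemma singleton_mem_allocs_docPart {Y : Finset X} {z : X} (hz : z ∈ Y) :
    {z} ∈ allocs M (docPart M Y (M.xD z)) :=
  mem_allocs.2 ⟨Finset.singleton_subset_iff.2 (mem_docPart.2 ⟨hz, rfl⟩), by
    simp [IsAllocation]⟩

lemma bestAlloc_mem (pr : Pref X) (Y : Finset X) : bestAlloc M pr Y ∈ allocs M Y :=
  @Finset.max'_mem _ pr _ _

lemma le_bestAlloc (pr : Pref X) {Y Z : Finset X} (hZ : Z ∈ allocs M Y) :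
    pr.le Z (bestAlloc M pr Y) :=
  @Finset.le_max' _ pr _ _ hZ

lemma Cd_subset (pr : Pref X) (d : D) (Y : Finset X) : Cd M pr d Y ⊆ docPart M Y d :=
  (mem_allocs.1 (bestAlloc_mem pr _)).1

lemma Ch_subset (h : H) (Y : Finset X) : Ch M h Y ⊆ hospPart M Y h :=
  (mem_allocs.1 (bestAlloc_mem _ _)).1

lemma Cd_eq_singleton_of_mem {pr : Pref X} {d : D} {Y : Finset X} {z : X}
    (hz : z ∈ Cd M pr d Y) : Cd M pr d Y = {z} := by
  refine Finset.eq_singleton_iff_unique_mem.2 ⟨hz, fun w hw => ?_⟩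
  refine (mem_allocs.1 (bestAlloc_mem pr _)).2 w hw z hz ?_
  exact (mem_docPart.1 (Cd_subset pr d Y hw)).2.trans (mem_docPart.1 (Cd_subset pr d Y hz)).2.symm

lemma Cd_eq_empty_or_singleton (pr : Pref X) (d : D) (Y : Finset X) :
    Cd M pr d Y = ∅ ∨ ∃ z ∈ docPart M Y d, Cd M pr d Y = {z} := by
  rcases (Cd M pr d Y).eq_empty_or_nonempty with h | ⟨z, hz⟩
  · exact Or.inl h
  · exact Or.inr ⟨z, Cd_subset pr d Y hz, Cd_eq_singleton_of_mem hz⟩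

lemma mem_Cd_of_forall_lt {pr : Pref X} {Y : Finset X} {x : X} (hxY : x ∈ Y)
    (hx : pr.lt ∅ {x}) (hw : ∀ w, M.xD w = M.xD x → w ≠ x → pr.lt {w} ∅) :
    x ∈ Cd M pr (M.xD x) Y := by
  have hnot : ¬ pr.le {x} ∅ := ((pr.lt_iff_le_not_ge _ _).1 hx).2
  have hle : pr.le {x} (Cd M pr (M.xD x) Y) :=
    le_bestAlloc pr (singleton_mem_allocs_docPart hxY)
  rcases Cd_eq_empty_or_singleton (M := M) pr (M.xD x) Y with h | ⟨w, hwY, h⟩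
  · exact absurd (h ▸ hle) hnot
  · rw [h] at hle ⊢
    obtain rfl | hwx := eq_or_ne w x
    · exact Finset.mem_singleton_self _
    · have hw0 := ((pr.lt_iff_le_not_ge _ _).1 (hw w (mem_docPart.1 hwY).2 hwx)).1
      exact absurd (pr.le_trans _ _ _ hle hw0) hnot

lemma mem_CH {Y : Finset X} {x : X} : x ∈ CH M Y ↔ x ∈ Ch M (M.xH x) Y := by
  refine ⟨fun hx => ?_, fun hx => Finset.mem_biUnion.2 ⟨M.xH x, Finset.mem_univ _, hx⟩⟩
  obtain ⟨h, -, hxh⟩ := Finset.mem_biUnion.1 hx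
  rwa [(mem_hospPart.1 (Ch_subset h Y hxh)).2]

lemma CH_subset (Y : Finset X) : CH M Y ⊆ Y := fun _ hx =>
  (mem_hospPart.1 (Ch_subset _ _ (mem_CH.1 hx))).1

lemma mem_CD {P : Profile D X} {Y : Finset X} {x : X} :
    x ∈ CD M P Y ↔ x ∈ Cd M (P (M.xD x)) (M.xD x) Y := by
  refine ⟨fun hx => ?_, fun hx => Finset.mem_biUnion.2 ⟨M.xD x, Finset.mem_univ _, hx⟩⟩
  obtain ⟨i, -, hxi⟩ := Finset.mem_biUnion.1 hx
  rwa [(mem_docPart.1 (Cd_subset (P i) i Y hxi)).2]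

lemma CD_subset (P : Profile D X) (Y : Finset X) : CD M P Y ⊆ Y := fun _ hx =>
  (mem_docPart.1 (Cd_subset _ _ _ (mem_CD.1 hx))).1

lemma docPart_CD (P : Profile D X) (Y : Finset X) (d : D) :
    docPart M (CD M P Y) d = Cd M (P d) d Y := by
  ext x
  rw [mem_docPart, mem_CD]
  constructor
  · rintro ⟨hx, rfl⟩
    exact hx
  · intro hx
    obtain rfl := (mem_docPart.1 (Cd_subset (P d) d Y hx)).2
    exact ⟨hx, rfl⟩

lemma docPart_CD_eq_singleton {P : Profile D X} {Y : Finset X} {x : X} (hx : x ∈ CD M P Y) :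
    docPart M (CD M P Y) (M.xD x) = {x} := by
  rw [docPart_CD]
  exact Cd_eq_singleton_of_mem (mem_CD.1 hx)

lemma Substitutable.mem_CH_of_subset {x : X} (hsub : Substitutable M (M.xH x))
    {Y W : Finset X} (hYW : hospPart M Y (M.xH x) ⊆ hospPart M W (M.xH x)) (hxY : x ∈ Y)
    (hxW : x ∈ CH M W) : x ∈ CH M Y :=
  mem_CH.2 (hsub W Y hYW x (mem_hospPart.2 ⟨hxY, rfl⟩) (mem_CH.1 hxW))

end Choice

section HDA

variable {M : Market D H X} (P : Profile D X)

lemma mem_HDAsets_succ {t : ℕ} {x : X} :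
    x ∈ HDAsets M P (t + 1) ↔
      x ∈ HDAsets M P t ∧ (x ∈ hOffers M P t → x ∈ CD M P (hOffers M P t)) := by
  simp only [HDAsets, hOffers, Finset.mem_sdiff, not_and, not_not]

lemma HDAsets_succ_subset (t : ℕ) : HDAsets M P (t + 1) ⊆ HDAsets M P t :=
  Finset.sdiff_subset

lemma hOffers_subset_HDAsets (t : ℕ) : hOffers M P t ⊆ HDAsets M P t :=
  CH_subset _

lemma HDAsets_card_succ :
    HDAsets M P (Fintype.card X + 1) = HDAsets M P (Fintype.card X) := by
  have eq_of_card {t : ℕ} (h : (HDAsets M P t).card = (HDAsets M P (t + 1)).card) :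
      HDAsets M P (t + 1) = HDAsets M P t :=
    Finset.eq_of_subset_of_card_le (HDAsets_succ_subset P t) h.le
  have anti : Antitone fun t => (HDAsets M P t).card :=
    antitone_nat_of_succ_le fun t => Finset.card_le_card (HDAsets_succ_subset P t)
  -- a round that removes nothing leaves the state, hence every later round, unchanged
  obtain ⟨n, hn, hconst⟩ := Nat.stabilises_of_antitone anti fun m hm =>
    congrArg Finset.card
      (congrArg (fun A => A \ (CH M A \ CD M P (CH M A))) (eq_of_card hm).symm)
  have hn : n ≤ Fintype.card X := hn.trans_eq (Finset.card_univ (α := X))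
  exact eq_of_card ((hconst _ hn).trans (hconst _ (hn.trans (Nat.le_succ _))).symm)

lemma CD_hOffers_card :
    CD M P (hOffers M P (Fintype.card X)) = hOffers M P (Fintype.card X) := by
  refine (CD_subset P _).antisymm fun x hx => ?_
  have hx' : x ∈ HDAsets M P (Fintype.card X + 1) :=
    (HDAsets_card_succ (M := M) P).symm ▸ hOffers_subset_HDAsets P _ hx
  exact ((mem_HDAsets_succ (M := M) P).1 hx').2 hx

lemma exists_mem_hOffers_of_notMem_HDAsets {t : ℕ} {x : X} (hx : x ∉ HDAsets M P t) :
    ∃ s < t, x ∈ hOffers M P s := by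
  induction t with
  | zero => exact absurd (Finset.mem_univ x) hx
  | succ t ih =>
    by_cases hxt : x ∈ HDAsets M P t
    · refine ⟨t, Nat.lt_succ_self t, ?_⟩
      by_contra hoff
      exact hx ((mem_HDAsets_succ P).2 ⟨hxt, fun h => absurd h hoff⟩)
    · obtain ⟨s, hs, hxs⟩ := ih hxt
      exact ⟨s, hs.trans (Nat.lt_succ_self t), hxs⟩

lemma mem_hOffers_succ (hsub : ∀ h, Substitutable M h) {t : ℕ} {x : X}
    (hx : x ∈ hOffers M P t) (hacc : x ∈ CD M P (hOffers M P t)) :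
    x ∈ hOffers M P (t + 1) :=
  (hsub _).mem_CH_of_subset
    (hospPart_subset_hospPart fun _ hw _ => HDAsets_succ_subset P t hw)
    ((mem_HDAsets_succ P).2 ⟨hOffers_subset_HDAsets P t hx, fun _ => hacc⟩) hx

lemma Cd_hOffers_mono (hsub : ∀ h, Substitutable M h) (d : D) {u v : ℕ} (huv : u ≤ v) :
    (P d).le (Cd M (P d) d (hOffers M P u)) (Cd M (P d) d (hOffers M P v)) := by
  induction v, huv using Nat.le_induction with
  | base => exact (P d).le_refl _
  | succ v _ ih =>
    refine (P d).le_trans _ _ _ ih (le_bestAlloc _ (mem_allocs_of_subset (bestAlloc_mem _ _) ?_))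
    intro x hx
    obtain ⟨hxv, rfl⟩ := mem_docPart.1 (Cd_subset _ _ _ hx)
    exact mem_docPart.2 ⟨mem_hOffers_succ P hsub hxv (mem_CD.2 hx), rfl⟩

lemma hospOpt_eq (d : D) :
    hospOpt M P d = Cd M (P d) d (hOffers M P (Fintype.card X)) :=
  docPart_CD P _ d

lemma singleton_le_Cd_hOffers (hsub : ∀ h, Substitutable M h) {s t : ℕ} (hst : s ≤ t)
    {z : X} (hz : z ∈ hOffers M P s) :
    (P (M.xD z)).le {z} (Cd M (P (M.xD z)) (M.xD z) (hOffers M P t)) :=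
  (P _).le_trans _ _ _ (le_bestAlloc _ (singleton_mem_allocs_docPart hz))
    (Cd_hOffers_mono P hsub _ hst)

end HDA

section Truncation

variable {M : Market D H X} {P Q : Profile D X} {h₀ : H} {K : Finset X}

lemma mem_HDAsets_of_accepted (hsub : ∀ h, Substitutable M h)
    (hK : ∀ x ∈ K, ∀ Y, x ∈ Y → x ∈ CD M Q Y)
    (hXK : ∀ x ∈ hOffers M P (Fintype.card X), M.xH x ≠ h₀ → x ∈ K) (t : ℕ) :
    ∀ x, (x ∈ HDAsets M P (Fintype.card X) ∧ M.xH x ≠ h₀) ∨ x ∈ K →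
      x ∈ HDAsets M Q t := by
  induction t with
  | zero => exact fun x _ => Finset.mem_univ x
  | succ t ih =>
    intro x hx
    refine (mem_HDAsets_succ Q).2 ⟨ih x hx, fun hoff => hK x ?_ _ hoff⟩
    rcases hx with ⟨hxA, hxh⟩ | hxK
    · refine hXK x ((hsub _).mem_CH_of_subset ?_ hxA hoff) hxh
      exact hospPart_subset_hospPart fun w hw hwh => ih w (Or.inl ⟨hw, hwh ▸ hxh⟩)
    · exact hxK

lemma exists_mem_hOffers_of_accepted (hsub : ∀ h, Substitutable M h)
    (hK : ∀ x ∈ K, ∀ Y, x ∈ Y → x ∈ CD M Q Y)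
    (hXK : ∀ x ∈ hOffers M P (Fintype.card X), M.xH x ≠ h₀ → x ∈ K)
    {z : X} (hz : z ∈ hOffers M Q (Fintype.card X)) (hzh : M.xH z ≠ h₀) :
    ∃ s ≤ Fintype.card X, z ∈ hOffers M P s := by
  by_cases hzA : z ∈ HDAsets M P (Fintype.card X)
  · refine ⟨_, le_rfl, (hsub _).mem_CH_of_subset ?_ hzA hz⟩
    exact hospPart_subset_hospPart fun w hw hwh =>
      mem_HDAsets_of_accepted hsub hK hXK _ w (Or.inl ⟨hw, hwh ▸ hzh⟩)
  · obtain ⟨s, hs, hzs⟩ := exists_mem_hOffers_of_notMem_HDAsets P hzA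
    exact ⟨s, hs.le, hzs⟩

lemma mem_CD_update_of_truncation {Pt : Profile D X} {Z : Finset X} {d : D} (P'd : Pref X)
    (hPt : ∀ i : D, i ≠ d →
      (∀ w : X, M.xD w = i → ({w} : Finset X) ≠ docPart M Z i →
        (Pt i).lt ({w} : Finset X) ∅) ∧
      (docPart M Z i ≠ ∅ → (Pt i).lt (∅ : Finset X) (docPart M Z i)))
    {x : X} (hxZ : docPart M Z (M.xD x) = {x}) (hxd : M.xD x ≠ d) {Y : Finset X}
    (hxY : x ∈ Y) : x ∈ CD M (Function.update Pt d P'd) Y := by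
  obtain ⟨hworse, hbetter⟩ := hPt _ hxd
  rw [hxZ] at hworse hbetter
  refine mem_CD.2 ?_
  rw [Function.update_of_ne hxd]
  exact mem_Cd_of_forall_lt hxY (hbetter (Finset.singleton_ne_empty x))
    fun w hw hwx => hworse w hw (by simpa using hwx)

end Truncation

theorem hospOpt_claim_general (M : Market D H X)
    (hone : ∀ x y : X, M.xD x = M.xD y → M.xH x = M.xH y → x = y)
    (hsub : ∀ h : H, Substitutable M h)
    (d : D) (Pd : Pref X) (y : X)
    (Phat : Profile D X) (hPhatd : Phat d = Pd)
    (hPhaty : hospOpt M Phat d = {y})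
    (Pt : Profile D X)
    (hPt : ∀ i : D, i ≠ d →
      (∀ w : X, M.xD w = i → ({w} : Finset X) ≠ docPart M (HDAoutput M Phat) i →
        (Pt i).lt ({w} : Finset X) ∅) ∧
      (docPart M (HDAoutput M Phat) i ≠ ∅ →
        (Pt i).lt (∅ : Finset X) (docPart M (HDAoutput M Phat) i))) :
    ∀ P'd : Pref X,
      Pd.le (hospOpt M (Function.update Pt d P'd) d) ({y} : Finset X) := by
  intro P'd
  have hy : Cd M Pd d (hOffers M Phat (Fintype.card X)) = {y} := by
    rw [← hPhatd, ← hospOpt_eq, hPhaty]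
  have hyd : M.xD y = d := (mem_docPart.1 (hPhaty ▸ Finset.mem_singleton_self y)).2
  have hK : ∀ x ∈ (HDAoutput M Phat).filter (M.xD · ≠ d), ∀ Y, x ∈ Y →
      x ∈ CD M (Function.update Pt d P'd) Y := fun x hx _ hxY =>
    mem_CD_update_of_truncation P'd hPt (docPart_CD_eq_singleton (Finset.mem_filter.1 hx).1)
      (Finset.mem_filter.1 hx).2 hxY
  have hXK : ∀ x ∈ hOffers M Phat (Fintype.card X), M.xH x ≠ M.xH y →
      x ∈ (HDAoutput M Phat).filter (M.xD · ≠ d) := by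
    intro x hx hxh
    rw [← CD_hOffers_card] at hx
    refine Finset.mem_filter.2 ⟨hx, fun hxd => hxh ?_⟩
    have hxy : x ∈ hospOpt M Phat d := mem_docPart.2 ⟨hx, hxd⟩
    rw [hPhaty, Finset.mem_singleton] at hxy
    rw [hxy]
  rw [hospOpt_eq, Function.update_self]
  rcases Cd_eq_empty_or_singleton (M := M) P'd d _ with hnone | ⟨z, hz, hzout⟩
  · rw [hnone, ← hy]
    exact le_bestAlloc Pd (empty_mem_allocs M _)
  · rw [hzout]
    obtain ⟨hzQ, hzd⟩ := mem_docPart.1 hz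
    by_cases hzh : M.xH z = M.xH y
    · rw [hone z y (hzd.trans hyd.symm) hzh]
      exact Pd.le_refl _
    · obtain ⟨s, hs, hzs⟩ := exists_mem_hOffers_of_accepted hsub hK hXK hzQ hzh
      have hzy := singleton_le_Cd_hOffers Phat hsub hs hzs
      rwa [hzd, hPhatd, hy] at hzy

/-- Claim in the proof of Theorem 3 (model without contracts): let
`{y} = W_d(P_d, O^{φ̲}(P_d))`, choose `P̂_{-d}` with `φ̲_d(P_d, P̂_{-d}) = {y}` and set
`X̂ := φ̲(P_d, P̂_{-d})`; if each doctor `i ≠ d` ranks `X̂_i` first and then `∅`, with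
every other contract unacceptable, then `{y} R_d φ̲_d(P'_d, P̃_{-d})` for every `P'_d`. -/
theorem hospOpt_claim (M : Market D H X)
    (hone : ∀ x y : X, M.xD x = M.xD y → M.xH x = M.xH y → x = y)
    (hsub : ∀ h : H, Substitutable M h)
    (d : D) (Pd : Pref X) (y : X)
    (hy : worstIn Pd (optionSet (hospOpt M) d Pd) = {y})
    (Phat : Profile D X) (hPhatd : Phat d = Pd)
    (hPhaty : hospOpt M Phat d = {y})
    (Pt : Profile D X)
    (hPt : ∀ i : D, i ≠ d →
      (∀ w : X, M.xD w = i → ({w} : Finset X) ≠ docPart M (HDAoutput M Phat) i →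
        (Pt i).lt ({w} : Finset X) ∅) ∧
      (docPart M (HDAoutput M Phat) i ≠ ∅ →
        (Pt i).lt (∅ : Finset X) (docPart M (HDAoutput M Phat) i))) :
    ∀ P'd : Pref X,
      Pd.le (hospOpt M (Function.update Pt d P'd) d) ({y} : Finset X) :=
  hospOpt_claim_general M hone hsub d Pd y Phat hPhatd hPhaty Pt hPt

end Matching
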